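/- There exists a constant κ > 0 depending only on c and C₀ such that every function π : I → ℝ with π_x ≥ 0 on I and Σ_{x∈I} π_x·(ℒφ)_x = 0 for every φ : I → ℝ satisfies max_{0≤x≤m−1} π_x ≤ π_0 ≤ κ^m · min_{0≤x≤m−1} π_x and max_{N−m+1≤x≤N} π_x ≤ π_N ≤ κ^m · min_{N−m+1≤x≤N} π_x; moreover π_0 = π_N. -/

import Mathlib

open scoped BigOperators

/-- Long-range Neumann generator `ℒ` acting on `ℤ`-indexed functions; for `x` in the
bulk `m ≤ x ≤ N − m` it is the long-range Laplacian, and near the two boundaries the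
jumps are clamped to stay inside `I = {0,…,N}`. -/
noncomputable def Lact (N m : ℕ) (α : ℕ → ℝ) (φ : ℤ → ℝ) (x : ℤ) : ℝ :=
  if (m : ℤ) ≤ x ∧ x ≤ (N : ℤ) - (m : ℤ) then
    ((N : ℝ) ^ 2 / 2) * ∑ k ∈ Finset.Icc 1 m, α k * (φ (x + k) + φ (x - k) - 2 * φ x)
  else if 0 ≤ x ∧ x ≤ (m : ℤ) - 1 then
    ((N : ℝ) ^ 2 / 2) * ∑ k ∈ Finset.Icc 1 m,
      α k * ((φ (x + k) - φ x) + (φ (x - min (k : ℤ) x) - φ x))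
  else
    ((N : ℝ) ^ 2 / 2) * ∑ k ∈ Finset.Icc 1 m,
      α k * ((φ (x - k) - φ x) + (φ (x + min (k : ℤ) ((N : ℤ) - x)) - φ x))

/-!
`ℒ` generates a random walk on `I` with jumps of length `k ≤ m` in either direction, clamped
to `I`, and an invariant `π` is a stationary measure of its rate matrix `Q x y = ℒ 𝟙_y (x)`.
Nearest-neighbour rates are at least `N²α₁/2 > 0`, so the chain is irreducible and its
stationary measure is unique up to a scalar; as the walk commutes with `x ↦ N - x`, this gives
`π (N - x) = π x`. At interior sites the columns of `Q` sum to `≤ 0`, so a maximum of `π` there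
is shared by the left neighbour: the maximum sits at `0`. Finally the balance at `j + 1`
bounds the inflow from `j`, `α₁ π_j ≤ 2 (∑ α) π_{j+1}`, and iterating gives
`π₀ ≤ κ^m π_x` with `κ = max 1 (2C₀/c)`.
-/

open Finset

section Generator

variable {ι : Type*} {s : Finset ι} {Q : ι → ι → ℝ} {π ρ : ι → ℝ}

def IsStationaryOn (s : Finset ι) (Q : ι → ι → ℝ) (π : ι → ℝ) : Prop :=
  ∀ y ∈ s, ∑ x ∈ s, π x * Q x y = 0

def IsIrreducibleOn (s : Finset ι) (Q : ι → ι → ℝ) : Prop :=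
  ∀ x ∈ s, ∀ y ∈ s, Relation.ReflTransGen (fun a b => a ∈ s ∧ b ∈ s ∧ 0 < Q a b) x y

namespace IsStationaryOn

theorem sub_mul (hπ : IsStationaryOn s Q π) (hρ : IsStationaryOn s Q ρ) (t : ℝ) :
    IsStationaryOn s Q (fun x => ρ x - t * π x) := by
  intro y hy
  simp only [_root_.sub_mul, sum_sub_distrib, mul_assoc, ← mul_sum, hπ y hy, hρ y hy]
  ring

variable [DecidableEq ι]

theorem sum_erase_eq (hπ : IsStationaryOn s Q π) {y : ι} (hy : y ∈ s) :
    ∑ x ∈ s.erase y, π x * Q x y = -(π y * Q y y) := by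
  have h := hπ y hy
  rw [← sum_erase_add _ _ hy] at h
  linarith

theorem mul_le (hπ : IsStationaryOn s Q π) (hπ0 : ∀ x ∈ s, 0 ≤ π x)
    (hQ : ∀ x ∈ s, ∀ y ∈ s, x ≠ y → 0 ≤ Q x y) {x y : ι} (hx : x ∈ s) (hy : y ∈ s)
    (hxy : x ≠ y) : π x * Q x y ≤ -(π y * Q y y) := by
  rw [← hπ.sum_erase_eq hy]
  refine single_le_sum (f := fun z => π z * Q z y) (fun z hz => ?_) (mem_erase.2 ⟨hxy, hx⟩)
  have hzs := mem_of_mem_erase hz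
  exact mul_nonneg (hπ0 z hzs) (hQ z hzs y hy (ne_of_mem_erase hz))

theorem pos_of_isIrreducibleOn (hπ : IsStationaryOn s Q π) (hπ0 : ∀ x ∈ s, 0 ≤ π x)
    (hQ : ∀ x ∈ s, ∀ y ∈ s, x ≠ y → 0 ≤ Q x y) (hirr : IsIrreducibleOn s Q) {x y : ι}
    (hx : x ∈ s) (hy : y ∈ s) (hπx : 0 < π x) : 0 < π y := by
  have hxy := hirr x hx y hy
  clear hy
  induction hxy with
  | refl => exact hπx
  | @tail b c _ hstep ih =>
    obtain ⟨hb, hc, hQbc⟩ := hstep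
    by_cases hbc : b = c
    · exact hbc ▸ ih
    have hflow := (mul_pos ih hQbc).trans_le (hπ.mul_le hπ0 hQ hb hc hbc)
    refine (hπ0 c hc).lt_of_ne fun h => ?_
    simp [← h] at hflow

/-- With `t = min ρ / π`, `ρ - t π` is a nonnegative stationary measure vanishing somewhere,
hence everywhere by irreducibility. -/
theorem exists_eq_mul (hπ : IsStationaryOn s Q π) (hρ : IsStationaryOn s Q ρ)
    (hπ0 : ∀ x ∈ s, 0 ≤ π x)
    (hQ : ∀ x ∈ s, ∀ y ∈ s, x ≠ y → 0 ≤ Q x y) (hirr : IsIrreducibleOn s Q) {x₀ : ι}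
    (hx₀ : x₀ ∈ s) (hπx₀ : 0 < π x₀) : ∃ t, ∀ x ∈ s, ρ x = t * π x := by
  have hpos x (hx : x ∈ s) : 0 < π x := hπ.pos_of_isIrreducibleOn hπ0 hQ hirr hx₀ hx hπx₀
  obtain ⟨z, hz, hmin⟩ := exists_min_image s (fun x => ρ x / π x) ⟨x₀, hx₀⟩
  set t := ρ z / π z
  have hσ0 : ∀ x ∈ s, 0 ≤ ρ x - t * π x := fun x hx =>
    sub_nonneg.2 ((le_div_iff₀ (hpos x hx)).1 (hmin x hx))
  have hσz : ρ z - t * π z = 0 := by simp [t, div_mul_cancel₀ _ (hpos z hz).ne']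
  refine ⟨t, fun x hx => ?_⟩
  by_contra hne
  have := (hπ.sub_mul hρ t).pos_of_isIrreducibleOn hσ0 hQ hirr hx hz
    ((hσ0 x hx).lt_of_ne (sub_ne_zero.2 hne).symm)
  exact this.ne' hσz

theorem eq_of_isMax (hπ : IsStationaryOn s Q π) (hπ0 : ∀ x ∈ s, 0 ≤ π x)
    (hQ : ∀ x ∈ s, ∀ y ∈ s, x ≠ y → 0 ≤ Q x y) {x y : ι} (hx : x ∈ s) (hy : y ∈ s)
    (hcol : ∑ z ∈ s, Q z y ≤ 0) (hmax : ∀ z ∈ s, π z ≤ π y) (hQxy : 0 < Q x y) :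
    π x = π y := by
  by_cases hxy : x = y
  · rw [hxy]
  have hdefect : ∑ z ∈ s.erase y, (π y - π z) * Q z y = π y * ∑ z ∈ s, Q z y := by
    rw [← add_sum_erase s _ hy]
    simp only [_root_.sub_mul, sum_sub_distrib, ← mul_sum, hπ.sum_erase_eq hy]
    ring
  have hterm : (π y - π x) * Q x y ≤ 0 := by
    refine (single_le_sum (f := fun z => (π y - π z) * Q z y) (fun z hz => ?_)
      (mem_erase.2 ⟨hxy, hx⟩)).trans (hdefect ▸ mul_nonpos_of_nonneg_of_nonpos (hπ0 y hy) hcol)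
    have hzs := mem_of_mem_erase hz
    exact mul_nonneg (sub_nonneg.2 (hmax z hzs)) (hQ z hzs y hy (ne_of_mem_erase hz))
  have := nonpos_of_mul_nonpos_left hterm hQxy
  linarith [hmax x hx]

end IsStationaryOn

end Generator

theorem Finset.sum_Icc_zero_sub {M : Type*} [AddCommMonoid M] (n : ℤ) (f : ℤ → M) :
    ∑ x ∈ Icc 0 n, f (n - x) = ∑ x ∈ Icc 0 n, f x :=
  sum_nbij' (n - ·) (n - ·) (fun x hx => by rw [mem_Icc] at hx ⊢; omega)
    (fun x hx => by rw [mem_Icc] at hx ⊢; omega)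
    (fun x _ => sub_sub_cancel n x) (fun x _ => sub_sub_cancel n x) fun _ _ => rfl

section ClampedWalk

variable {N m : ℕ} {α : ℕ → ℝ} {x y : ℤ}

theorem Lact_eq_clamp (h2m : 2 * m ≤ N) (φ : ℤ → ℝ) (hx : x ∈ Icc (0 : ℤ) N) :
    Lact N m α φ x = (N : ℝ) ^ 2 / 2 * ∑ k ∈ Icc 1 m,
      α k * ((φ (min (x + k) N) - φ x) + (φ (max (x - k) 0) - φ x)) := by
  rw [mem_Icc] at hx
  unfold Lact
  split_ifs with hbulk hleft <;> congr 1 <;> refine sum_congr rfl fun k hk => ?_ <;>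
    rw [mem_Icc] at hk
  · rw [min_eq_left (show x + k ≤ N by omega), max_eq_left (show 0 ≤ x - k by omega)]
    ring
  · rw [min_eq_left (show x + k ≤ N by omega), show x - min (k : ℤ) x = max (x - k) 0 by omega]
  · rw [max_eq_left (show 0 ≤ x - k by omega),
      show x + min (k : ℤ) (N - x) = min (x + k) N by omega]
    ring

theorem Lact_comp_reflect (h2m : 2 * m ≤ N) (φ : ℤ → ℝ) (hx : x ∈ Icc (0 : ℤ) N) :
    Lact N m α (fun u => φ (N - u)) x = Lact N m α φ (N - x) := by
  have hx' : (N : ℤ) - x ∈ Icc (0 : ℤ) N := by rw [mem_Icc] at hx ⊢; omega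
  rw [Lact_eq_clamp h2m _ hx, Lact_eq_clamp h2m _ hx']
  congr 1
  refine sum_congr rfl fun k _ => ?_
  rw [show (N : ℤ) - min (x + k) N = max (N - x - k) 0 by omega,
    show (N : ℤ) - max (x - k) 0 = min (N - x + k) N by omega]
  ring

noncomputable def jumpRate (N m : ℕ) (α : ℕ → ℝ) (x y : ℤ) : ℝ :=
  Lact N m α (Pi.single y 1) x

theorem jumpRate_eq_of_ne (h2m : 2 * m ≤ N) (hx : x ∈ Icc (0 : ℤ) N) (hxy : x ≠ y) :
    jumpRate N m α x y = (N : ℝ) ^ 2 / 2 * ∑ k ∈ Icc 1 m,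
      α k * ((if min (x + k) N = y then 1 else 0) + (if max (x - k) 0 = y then 1 else 0)) := by
  simp only [jumpRate, Lact_eq_clamp h2m _ hx, Pi.single_apply, if_neg hxy, sub_zero]

theorem jumpRate_nonneg (h2m : 2 * m ≤ N) (hα : ∀ k ∈ Icc 1 m, 0 ≤ α k)
    (hx : x ∈ Icc (0 : ℤ) N) (hxy : x ≠ y) : 0 ≤ jumpRate N m α x y := by
  rw [jumpRate_eq_of_ne h2m hx hxy]
  exact mul_nonneg (by positivity) (sum_nonneg fun k hk => mul_nonneg (hα k hk) (by positivity))

theorem le_jumpRate (h2m : 2 * m ≤ N) (hα : ∀ k ∈ Icc 1 m, 0 ≤ α k) {k : ℕ}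
    (hk : k ∈ Icc 1 m) (hx : x ∈ Icc (0 : ℤ) N) (hxy : x ≠ y)
    (hjump : min (x + k) N = y ∨ max (x - k) 0 = y) :
    (N : ℝ) ^ 2 / 2 * α k ≤ jumpRate N m α x y := by
  rw [jumpRate_eq_of_ne h2m hx hxy]
  refine mul_le_mul_of_nonneg_left ((le_mul_of_one_le_right (hα k hk) ?_).trans
    (single_le_sum (fun j hj => mul_nonneg (hα j hj) (by positivity)) hk)) (by positivity)
  rcases hjump with h | h <;> simp only [h, if_true] <;> split_ifs <;> norm_num

theorem neg_jumpRate_self_le (h2m : 2 * m ≤ N) (hα : ∀ k ∈ Icc 1 m, 0 ≤ α k)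
    (hy : y ∈ Icc (0 : ℤ) N) :
    -jumpRate N m α y y ≤ (N : ℝ) ^ 2 / 2 * (2 * ∑ k ∈ Icc 1 m, α k) := by
  rw [jumpRate, Lact_eq_clamp h2m _ hy, ← mul_neg, ← sum_neg_distrib]
  refine mul_le_mul_of_nonneg_left ?_ (by positivity)
  rw [mul_sum]
  refine sum_le_sum fun k hk => ?_
  have : -2 ≤ ((Pi.single y 1 : ℤ → ℝ) (min (y + k) N) - (Pi.single y 1 : ℤ → ℝ) y) +
      ((Pi.single y 1 : ℤ → ℝ) (max (y - k) 0) - (Pi.single y 1 : ℤ → ℝ) y) := by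
    simp only [Pi.single_apply]
    split_ifs <;> norm_num
  nlinarith [hα k hk]

/-- Each jump length reaches an interior `y` from at most one site in each direction. -/
theorem sum_jumpRate_nonpos (h2m : 2 * m ≤ N) (hα : ∀ k ∈ Icc 1 m, 0 ≤ α k) (hy0 : 0 < y)
    (hyN : y < N) : ∑ x ∈ Icc (0 : ℤ) N, jumpRate N m α x y ≤ 0 := by
  simp only [jumpRate]
  rw [sum_congr rfl fun x hx => Lact_eq_clamp h2m _ hx, ← mul_sum, sum_comm]
  refine mul_nonpos_of_nonneg_of_nonpos (by positivity) (sum_nonpos fun k hk => ?_)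
  rw [← mul_sum]
  refine mul_nonpos_of_nonneg_of_nonpos (hα k hk) ?_
  have hup : ∀ x : ℤ, min (x + k) N = y ↔ x = y - k := fun x => by omega
  have hdown : ∀ x : ℤ, max (x - k) 0 = y ↔ x = y + k := fun x => by omega
  simp only [Pi.single_apply, hup, hdown, sum_add_distrib, sum_sub_distrib, sum_ite_eq',
    if_pos (mem_Icc.2 ⟨hy0.le, hyN.le⟩)]
  split_ifs <;> norm_num

theorem isIrreducibleOn_jumpRate (hm : 1 ≤ m) (h2m : 2 * m ≤ N) (hα : ∀ k ∈ Icc 1 m, 0 ≤ α k)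
    (hα1 : 0 < α 1) : IsIrreducibleOn (Icc (0 : ℤ) N) (jumpRate N m α) := by
  have hr : 0 < (N : ℝ) ^ 2 / 2 * α 1 := by
    have : 0 < N := by omega
    positivity
  have h1 : 1 ∈ Icc 1 m := mem_Icc.2 ⟨le_rfl, hm⟩
  intro x hx y hy
  rw [mem_Icc] at hx hy
  refine reflTransGen_of_succ _ (fun i hi => ?_) (fun i hi => ?_) <;>
    rw [Order.succ_eq_add_one] <;> rw [Set.mem_Ico] at hi
  · refine ⟨mem_Icc.2 (by omega), mem_Icc.2 (by omega), hr.trans_le ?_⟩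
    exact le_jumpRate h2m hα h1 (mem_Icc.2 (by omega)) (by omega) (Or.inl (by push_cast; omega))
  · refine ⟨mem_Icc.2 (by omega), mem_Icc.2 (by omega), hr.trans_le ?_⟩
    exact le_jumpRate h2m hα h1 (mem_Icc.2 (by omega)) (by omega) (Or.inr (by push_cast; omega))

end ClampedWalk

section InvariantMeasure

variable {N m : ℕ} {α : ℕ → ℝ} {π : ℤ → ℝ}

theorem isStationaryOn_jumpRate
    (hinv : ∀ φ : ℤ → ℝ, ∑ x ∈ Icc (0 : ℤ) N, π x * Lact N m α φ x = 0) :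
    IsStationaryOn (Icc (0 : ℤ) N) (jumpRate N m α) π :=
  fun _ _ => hinv _

theorem sum_apply_sub_mul_Lact_eq_zero (h2m : 2 * m ≤ N)
    (hinv : ∀ φ : ℤ → ℝ, ∑ x ∈ Icc (0 : ℤ) N, π x * Lact N m α φ x = 0) (φ : ℤ → ℝ) :
    ∑ x ∈ Icc (0 : ℤ) N, π (N - x) * Lact N m α φ x = 0 := by
  rw [← sum_Icc_zero_sub]
  refine (sum_congr rfl fun x hx => ?_).trans (hinv fun u => φ (N - u))
  rw [sub_sub_cancel, Lact_comp_reflect h2m φ hx]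

theorem apply_sub_eq_apply (hm : 1 ≤ m) (h2m : 2 * m ≤ N) (hα : ∀ k ∈ Icc 1 m, 0 ≤ α k)
    (hα1 : 0 < α 1) (hπ : ∀ x ∈ Icc (0 : ℤ) N, 0 ≤ π x)
    (hinv : ∀ φ : ℤ → ℝ, ∑ x ∈ Icc (0 : ℤ) N, π x * Lact N m α φ x = 0) :
    ∀ x ∈ Icc (0 : ℤ) N, π (N - x) = π x := by
  by_cases hzero : ∀ x ∈ Icc (0 : ℤ) N, π x = 0
  · intro x hx
    rw [hzero x hx, hzero _ (by rw [mem_Icc] at hx ⊢; omega)]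
  push Not at hzero
  obtain ⟨x₀, hx₀, hπx₀⟩ := hzero
  have hpos : 0 < π x₀ := (hπ x₀ hx₀).lt_of_ne' hπx₀
  obtain ⟨t, ht⟩ := (isStationaryOn_jumpRate hinv).exists_eq_mul
    (fun _ _ => sum_apply_sub_mul_Lact_eq_zero h2m hinv _) hπ
    (fun _ hx _ _ hxy => jumpRate_nonneg h2m hα hx hxy)
    (isIrreducibleOn_jumpRate hm h2m hα hα1) hx₀ hpos
  have hmass : t * ∑ x ∈ Icc (0 : ℤ) N, π x = ∑ x ∈ Icc (0 : ℤ) N, π x := by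
    rw [mul_sum, ← sum_congr rfl ht, sum_Icc_zero_sub]
  have ht1 : t = 1 := (mul_left_eq_self₀.1 hmass).resolve_right (sum_pos' hπ ⟨x₀, hx₀, hpos⟩).ne'
  intro x hx
  rw [ht x hx, ht1, one_mul]

theorem apply_le_apply_zero (hm : 1 ≤ m) (h2m : 2 * m ≤ N) (hα : ∀ k ∈ Icc 1 m, 0 ≤ α k)
    (hα1 : 0 < α 1) (hπ : ∀ x ∈ Icc (0 : ℤ) N, 0 ≤ π x)
    (hinv : ∀ φ : ℤ → ℝ, ∑ x ∈ Icc (0 : ℤ) N, π x * Lact N m α φ x = 0) :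
    ∀ x ∈ Icc (0 : ℤ) N, π x ≤ π 0 := by
  obtain ⟨y, hy, hmax⟩ := exists_max_image (Icc (0 : ℤ) N) π ⟨0, by simp⟩
  suffices π y ≤ π 0 from fun x hx => (hmax x hx).trans this
  rcases (mem_Icc.1 hy).2.eq_or_lt with rfl | hyN
  · simpa using (apply_sub_eq_apply hm h2m hα hα1 hπ hinv 0 (by simp)).le
  have hr : 0 < (N : ℝ) ^ 2 / 2 * α 1 := by
    have : 0 < N := by omega
    positivity
  have hdescend : ∀ z ≤ y, 0 ≤ z → π z = π y := by
    intro z hz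
    induction z, hz using Int.leInductionDown with
    | base => exact fun _ => rfl
    | pred z hzy ih =>
      intro hz0
      have hz : π z = π y := ih (by omega)
      rw [← hz]
      refine (isStationaryOn_jumpRate hinv).eq_of_isMax hπ
        (fun _ hx _ _ hxy => jumpRate_nonneg h2m hα hx hxy) (mem_Icc.2 (by omega))
        (mem_Icc.2 (by omega)) (sum_jumpRate_nonpos h2m hα (by omega) (by omega))
        (fun w hw => hz ▸ hmax w hw) (hr.trans_le ?_)
      exact le_jumpRate h2m hα (mem_Icc.2 ⟨le_rfl, hm⟩) (mem_Icc.2 (by omega)) (by omega)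
        (Or.inl (by push_cast; omega))
  exact (hdescend 0 (mem_Icc.1 hy).1 le_rfl).ge

theorem mul_apply_le_mul_apply_add_one (hm : 1 ≤ m) (h2m : 2 * m ≤ N)
    (hα : ∀ k ∈ Icc 1 m, 0 ≤ α k) (hπ : ∀ x ∈ Icc (0 : ℤ) N, 0 ≤ π x)
    (hinv : ∀ φ : ℤ → ℝ, ∑ x ∈ Icc (0 : ℤ) N, π x * Lact N m α φ x = 0) {j : ℤ} (hj0 : 0 ≤ j)
    (hjN : j < N) : α 1 * π j ≤ 2 * (∑ k ∈ Icc 1 m, α k) * π (j + 1) := by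
  have hr : 0 < (N : ℝ) ^ 2 / 2 := by
    have : 0 < N := by omega
    positivity
  have hj : j ∈ Icc (0 : ℤ) N := mem_Icc.2 ⟨hj0, hjN.le⟩
  have hj1 : j + 1 ∈ Icc (0 : ℤ) N := mem_Icc.2 ⟨by omega, by omega⟩
  have hrate := le_jumpRate h2m hα (mem_Icc.2 ⟨le_rfl, hm⟩) hj (y := j + 1) (by omega)
    (Or.inl (by push_cast; omega))
  refine le_of_mul_le_mul_left ?_ hr
  calc (N : ℝ) ^ 2 / 2 * (α 1 * π j) = π j * ((N : ℝ) ^ 2 / 2 * α 1) := by ring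
    _ ≤ π j * jumpRate N m α j (j + 1) := mul_le_mul_of_nonneg_left hrate (hπ j hj)
    _ ≤ π (j + 1) * -jumpRate N m α (j + 1) (j + 1) := by
      simpa using (isStationaryOn_jumpRate hinv).mul_le hπ
        (fun _ hx _ _ hxy => jumpRate_nonneg h2m hα hx hxy) hj hj1 (by omega)
    _ ≤ π (j + 1) * ((N : ℝ) ^ 2 / 2 * (2 * ∑ k ∈ Icc 1 m, α k)) :=
      mul_le_mul_of_nonneg_left (neg_jumpRate_self_le h2m hα hj1) (hπ _ hj1)
    _ = (N : ℝ) ^ 2 / 2 * (2 * (∑ k ∈ Icc 1 m, α k) * π (j + 1)) := by ring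

theorem apply_zero_le_pow_mul (hm : 1 ≤ m) (h2m : 2 * m ≤ N) (hα : ∀ k ∈ Icc 1 m, 0 ≤ α k)
    (hα1 : 0 < α 1) (hπ : ∀ x ∈ Icc (0 : ℤ) N, 0 ≤ π x)
    (hinv : ∀ φ : ℤ → ℝ, ∑ x ∈ Icc (0 : ℤ) N, π x * Lact N m α φ x = 0) {κ : ℝ} (hκ : 1 ≤ κ)
    (hκα : 2 * ∑ k ∈ Icc 1 m, α k ≤ κ * α 1) :
    ∀ x ∈ Icc (0 : ℤ) (m - 1), π 0 ≤ κ ^ m * π x := by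
  intro x hx
  obtain ⟨hx0, hxm⟩ := mem_Icc.1 hx
  lift x to ℕ using hx0
  have hκ0 : 0 < κ := one_pos.trans_le hκ
  have hstep : ∀ j < x, κ⁻¹ * π j ≤ π (j + 1 : ℕ) := by
    intro j hj
    rw [inv_mul_le_iff₀ hκ0]
    refine le_of_mul_le_mul_left ?_ hα1
    calc α 1 * π j ≤ 2 * (∑ k ∈ Icc 1 m, α k) * π (j + 1) :=
          mul_apply_le_mul_apply_add_one hm h2m hα hπ hinv (by positivity) (by omega)
      _ ≤ κ * α 1 * π (j + 1) := mul_le_mul_of_nonneg_right hκα (hπ _ (mem_Icc.2 (by omega)))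
      _ = α 1 * (κ * π (j + 1 : ℕ)) := by push_cast; ring
  have hgeom := geom_le (u := fun j => π j) (inv_nonneg.2 hκ0.le) x hstep
  rw [inv_pow, inv_mul_le_iff₀ (pow_pos hκ0 x)] at hgeom
  exact hgeom.trans (mul_le_mul_of_nonneg_right (pow_le_pow_right₀ hκ (by omega))
    (hπ _ (mem_Icc.2 (by omega))))

end InvariantMeasure

theorem invariant_measure_boundary_estimate_general (c C₀ : ℝ) (hc : 0 < c) :
    ∃ κ : ℝ, 0 < κ ∧
      ∀ (N m : ℕ) (α : ℕ → ℝ), 1 ≤ m → 2 ≤ N → 2 * m ≤ N →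
        (∀ k ∈ Finset.Icc 1 m, 0 ≤ α k) → c ≤ α 1 →
        (∑ k ∈ Finset.Icc 1 m, α k) ≤ C₀ →
        ∀ π : ℤ → ℝ,
          (∀ x ∈ Finset.Icc (0 : ℤ) (N : ℤ), 0 ≤ π x) →
          (∀ φ : ℤ → ℝ, ∑ x ∈ Finset.Icc (0 : ℤ) (N : ℤ), π x * Lact N m α φ x = 0) →
          (∀ x ∈ Finset.Icc (0 : ℤ) ((m : ℤ) - 1), π x ≤ π 0) ∧
          (∀ x ∈ Finset.Icc (0 : ℤ) ((m : ℤ) - 1), π 0 ≤ κ ^ m * π x) ∧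
          (∀ x ∈ Finset.Icc ((N : ℤ) - (m : ℤ) + 1) (N : ℤ), π x ≤ π (N : ℤ)) ∧
          (∀ x ∈ Finset.Icc ((N : ℤ) - (m : ℤ) + 1) (N : ℤ), π (N : ℤ) ≤ κ ^ m * π x) ∧
          π 0 = π (N : ℤ) := by
  refine ⟨max 1 (2 * C₀ / c), by positivity, ?_⟩
  intro N m α hm _ h2m hα hα1 hA π hπ hinv
  have hα1_pos : 0 < α 1 := hc.trans_le hα1
  have hκα : 2 * ∑ k ∈ Icc 1 m, α k ≤ max 1 (2 * C₀ / c) * α 1 :=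
    calc 2 * ∑ k ∈ Icc 1 m, α k ≤ 2 * C₀ / c * c := by rw [div_mul_cancel₀ _ hc.ne']; linarith
      _ ≤ max 1 (2 * C₀ / c) * α 1 := mul_le_mul (le_max_right _ _) hα1 hc.le (by positivity)
  have hsym := apply_sub_eq_apply hm h2m hα hα1_pos hπ hinv
  have hmax := apply_le_apply_zero hm h2m hα hα1_pos hπ hinv
  have hlow := apply_zero_le_pow_mul hm h2m hα hα1_pos hπ hinv (le_max_left _ _) hκα
  have hN : π 0 = π N := by simpa using (hsym 0 (by simp)).symm
  refine ⟨fun x hx => hmax x ?_, hlow, fun x hx => hN ▸ hmax x ?_, fun x hx => ?_, hN⟩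
  · rw [mem_Icc] at hx ⊢; omega
  · rw [mem_Icc] at hx ⊢; omega
  rw [mem_Icc] at hx
  rw [← hN, ← hsym x (mem_Icc.2 (by omega))]
  exact hlow _ (mem_Icc.2 (by omega))

/-- There is a constant `κ > 0` depending only on `c, C₀` such that any nonnegative
invariant function `π` satisfies
`max_{0≤x≤m−1} π_x ≤ π_0 ≤ κ^m · min_{0≤x≤m−1} π_x`, the mirror estimate at the right
boundary block, and `π_0 = π_N`. -/
theorem invariant_measure_boundary_estimate (c C₀ : ℝ) (hc : 0 < c) (hC₀ : 0 < C₀) :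
    ∃ κ : ℝ, 0 < κ ∧
      ∀ (N m : ℕ) (α : ℕ → ℝ), 1 ≤ m → 2 ≤ N → 2 * m ≤ N →
        (∀ k ∈ Finset.Icc 1 m, 0 ≤ α k) → c ≤ α 1 →
        (∑ k ∈ Finset.Icc 1 m, α k) ≤ C₀ →
        ∀ π : ℤ → ℝ,
          (∀ x ∈ Finset.Icc (0 : ℤ) (N : ℤ), 0 ≤ π x) →
          (∀ φ : ℤ → ℝ, ∑ x ∈ Finset.Icc (0 : ℤ) (N : ℤ), π x * Lact N m α φ x = 0) →
          (∀ x ∈ Finset.Icc (0 : ℤ) ((m : ℤ) - 1), π x ≤ π 0) ∧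
          (∀ x ∈ Finset.Icc (0 : ℤ) ((m : ℤ) - 1), π 0 ≤ κ ^ m * π x) ∧
          (∀ x ∈ Finset.Icc ((N : ℤ) - (m : ℤ) + 1) (N : ℤ), π x ≤ π (N : ℤ)) ∧
          (∀ x ∈ Finset.Icc ((N : ℤ) - (m : ℤ) + 1) (N : ℤ), π (N : ℤ) ≤ κ ^ m * π x) ∧
          π 0 = π (N : ℤ) :=
  invariant_measure_boundary_estimate_general c C₀ hc
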